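/- arXiv:2111.00260 — 3 statements merged into one kernel-verified Lean document; each statement's English description precedes it below -/
import Mathlib

section
/- Let μ > 0, β > 0 and h > 0, let Pe = βh/(2μ) be the local Péclet number, let τ = (h/(2β))·(coth(Pe) − 1/Pe) be the SUPG stabilization parameter, and set ρ = exp(βh/μ). Then the effective diffusion μ + τβ² satisfies the amplification-factor identity (μ + τβ²)·(ρ + ρ⁻¹ − 2) = (βh/2)·(ρ − ρ⁻¹). -/
/-!
With `Pe = βh/(2μ)` the SUPG term cancels the physical diffusion except for its `coth` part:
`μ + τβ² = (βh/2) coth Pe`. Since `ρ = exp (2 Pe)`, the two amplification factors are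
`ρ + ρ⁻¹ - 2 = 4 sinh² Pe` and `ρ - ρ⁻¹ = 4 sinh Pe cosh Pe`, and `coth Pe · sinh² Pe = cosh Pe · sinh Pe`.
-/

/-- The hyperbolic cotangent, `coth θ = cosh θ / sinh θ`. -/
noncomputable def coth (θ : ℝ) : ℝ := Real.cosh θ / Real.sinh θ

open Real

lemma coth_mul_sinh_sq (x : ℝ) : coth x * sinh x ^ 2 = cosh x * sinh x := by
  rcases eq_or_ne (sinh x) 0 with hs | hs
  · simp [hs]
  · rw [coth]
    field_simp

lemma exp_two_mul_add_inv_sub_two (x : ℝ) :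
    exp (2 * x) + (exp (2 * x))⁻¹ - 2 = 4 * sinh x ^ 2 := by
  rw [← exp_neg, sinh_eq, two_mul, neg_add, exp_add, exp_add, exp_neg]
  field_simp
  ring

lemma exp_two_mul_sub_inv (x : ℝ) :
    exp (2 * x) - (exp (2 * x))⁻¹ = 4 * sinh x * cosh x := by
  rw [← exp_neg, sinh_eq, cosh_eq, two_mul, neg_add, exp_add, exp_add]
  ring

lemma add_supg_mul_sq_eq_coth {μ β h : ℝ} (hβ : β ≠ 0) (hh : h ≠ 0) :
    μ + h / (2 * β) * (coth (β * h / (2 * μ)) - 1 / (β * h / (2 * μ))) * β ^ 2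
      = β * h / 2 * coth (β * h / (2 * μ)) := by
  field_simp
  ring

theorem stmt_6_general (μ β h : ℝ) (hβ : 0 < β) (hh : 0 < h) :
    let Pe : ℝ := β * h / (2 * μ)
    let τ : ℝ := h / (2 * β) * (coth Pe - 1 / Pe)
    let ρ : ℝ := Real.exp (β * h / μ)
    (μ + τ * β ^ 2) * (ρ + ρ⁻¹ - 2) = (β * h / 2) * (ρ - ρ⁻¹) := by
  intro Pe τ ρ
  have hρ : ρ = exp (2 * Pe) := by
    simp only [ρ, Pe]
    congr 1
    field_simp
  rw [add_supg_mul_sq_eq_coth hβ.ne' hh.ne', hρ, exp_two_mul_add_inv_sub_two,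
    exp_two_mul_sub_inv]
  linear_combination 2 * β * h * coth_mul_sinh_sq Pe

/-- With `Pe = βh/(2μ)`, `τ = (h/(2β))·(coth Pe − 1/Pe)` and
`ρ = exp(βh/μ)`, the effective diffusion `μ + τβ²` satisfies the
amplification-factor identity `(μ + τβ²)(ρ + ρ⁻¹ − 2) = (βh/2)(ρ − ρ⁻¹)`. -/
theorem stmt_6 (μ β h : ℝ) (hμ : 0 < μ) (hβ : 0 < β) (hh : 0 < h) :
    let Pe : ℝ := β * h / (2 * μ)
    let τ : ℝ := h / (2 * β) * (coth Pe - 1 / Pe)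
    let ρ : ℝ := Real.exp (β * h / μ)
    (μ + τ * β ^ 2) * (ρ + ρ⁻¹ - 2) = (β * h / 2) * (ρ - ρ⁻¹) :=
  stmt_6_general μ β h hβ hh
end

section
/- Let μ > 0, β > 0, let N ≥ 2 be an integer, set h = 1/N, Pe = βh/(2μ), τ* = (h/(2β))·(coth(Pe) − 1/Pe), and ρ = exp(βh/μ). Define u_k = (ρ^k − 1)/(ρ^N − 1) for k = 0, 1, …, N (these are the values u(kh) of the exact solution u(x) = (exp(βx/μ)−1)/(exp(β/μ)−1) at the mesh nodes). Then u_0 = 0, u_N = 1, and for every k with 1 ≤ k ≤ N−1 the SUPG difference equation holds: (μ + τ*β²)·(2u_k − u_{k+1} − u_{k−1})/h² + β·(u_{k+1} − u_{k−1})/(2h) = 0. That is, the SUPG scheme with stabilization parameter τ̃₁ = τ* is nodally exact for the 1D advection–diffusion problem with zero forcing and linear finite elements. -/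
/-!
With `ρ = exp(βh/μ) = exp(2 Pe)` one has `coth Pe = (ρ + 1)/(ρ - 1)`, so the SUPG parameter
turns the diffusion coefficient into `μ + τ*β² = (βh/2)(ρ + 1)/(ρ - 1)`. For this coefficient
the three-point scheme annihilates every discrete exponential `a ρ^k + b`: both the second
difference and the central difference of `ρ^k` are multiples of `ρ^(k-1)(ρ - 1)`, with ratio
`-(ρ - 1)/(ρ + 1)`. The exact nodal values are such a discrete exponential.
-/

noncomputable def supgStencil (ε β h : ℝ) (u : ℕ → ℝ) (k : ℕ) : ℝ :=
  ε * (2 * u k - u (k + 1) - u (k - 1)) / h ^ 2 + β * (u (k + 1) - u (k - 1)) / (2 * h)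

lemma coth_eq_exp_two_mul (θ : ℝ) :
    coth θ = (Real.exp (2 * θ) + 1) / (Real.exp (2 * θ) - 1) := by
  have hexp : Real.exp (2 * θ) = Real.exp θ * Real.exp θ := by
    rw [two_mul, Real.exp_add]
  have hpos : 0 < Real.exp θ := Real.exp_pos θ
  rw [coth, Real.cosh_eq, Real.sinh_eq, Real.exp_neg, hexp, div_div_div_cancel_right₀ two_ne_zero,
    ← mul_div_mul_left _ _ hpos.ne']
  congr 1 <;> field_simp

lemma supg_diffusion_eq (μ β h : ℝ) (hβ : β ≠ 0) (hh : h ≠ 0) :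
    μ + h / (2 * β) * (coth (β * h / (2 * μ)) - 1 / (β * h / (2 * μ))) * β ^ 2
      = β * h / 2 * coth (β * h / (2 * μ)) := by
  rcases eq_or_ne μ 0 with rfl | hμ
  · simp only [mul_zero, div_zero, sub_zero]
    field_simp
    ring
  · field_simp
    ring

lemma supgStencil_geometric (β h ρ a b : ℝ) (hh : h ≠ 0) (hρ : ρ ≠ 1) {k : ℕ} (hk : 1 ≤ k) :
    supgStencil (β * h / 2 * ((ρ + 1) / (ρ - 1))) β h (fun n => a * ρ ^ n + b) k = 0 := by
  obtain ⟨j, rfl⟩ : ∃ j, k = j + 1 := ⟨k - 1, by omega⟩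
  have hρ' : ρ - 1 ≠ 0 := sub_ne_zero.mpr hρ
  simp only [supgStencil, Nat.add_sub_cancel]
  field_simp
  ring

/-- Nodal exactness of the SUPG scheme with the theoretical stabilization
parameter `τ* = (h/(2β))·(coth Pe − 1/Pe)` for the 1D advection–diffusion problem with
zero forcing and linear finite elements: with `h = 1/N`, `ρ = exp(βh/μ)` and the exact
nodal values `u_k = (ρ^k − 1)/(ρ^N − 1)`, one has `u_0 = 0`, `u_N = 1`, and the SUPG
difference equation
`(μ + τ*β²)(2u_k − u_{k+1} − u_{k−1})/h² + β(u_{k+1} − u_{k−1})/(2h) = 0`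
holds at every interior node `1 ≤ k ≤ N−1`. -/
theorem stmt_7 (μ β : ℝ) (hμ : 0 < μ) (hβ : 0 < β) (N : ℕ) (hN : 2 ≤ N) :
    let h : ℝ := 1 / N
    let Pe : ℝ := β * h / (2 * μ)
    let τstar : ℝ := h / (2 * β) * (coth Pe - 1 / Pe)
    let ρ : ℝ := Real.exp (β * h / μ)
    let u : ℕ → ℝ := fun k => (ρ ^ k - 1) / (ρ ^ N - 1)
    u 0 = 0 ∧ u N = 1 ∧
    ∀ k : ℕ, 1 ≤ k → k ≤ N - 1 →
      (μ + τstar * β ^ 2) * (2 * u k - u (k + 1) - u (k - 1)) / h ^ 2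
        + β * (u (k + 1) - u (k - 1)) / (2 * h) = 0 := by
  intro h Pe τstar ρ u
  have hh : 0 < h := by simp only [h]; positivity
  have hρ_eq : ρ = Real.exp (2 * Pe) := by
    simp only [ρ, Pe]
    congr 1
    field_simp
  have hρ : 1 < ρ := Real.one_lt_exp_iff.mpr (by positivity)
  have hρN : ρ ^ N - 1 ≠ 0 := (sub_pos.mpr (one_lt_pow₀ hρ (by omega))).ne'
  have hdiff : μ + τstar * β ^ 2 = β * h / 2 * ((ρ + 1) / (ρ - 1)) := by
    rw [supg_diffusion_eq μ β h hβ.ne' hh.ne', coth_eq_exp_two_mul, ← hρ_eq]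
  have hu : u = fun k => (ρ ^ N - 1)⁻¹ * ρ ^ k + -(ρ ^ N - 1)⁻¹ := by
    funext k
    simp only [u]
    ring
  refine ⟨by simp [u], div_self hρN, fun k hk _ => ?_⟩
  show supgStencil (μ + τstar * β ^ 2) β h u k = 0
  rw [hdiff, hu]
  exact supgStencil_geometric β h ρ _ _ hh.ne' hρ.ne' hk
end

section
/- Fix μ > 0, β > 0 and h > 0, and for r > 0 define the generalized theoretical SUPG stabilization parameter τ̃(r) = (h/(2βr))·ξ(Pe/r), where Pe = βh/(2μ) and ξ(θ) = coth(θ) − 1/θ. Then the map r ↦ τ̃(r) is strictly decreasing on (0, ∞). -/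
lemma coth_mul_strictMono : StrictMonoOn (fun θ : ℝ => θ * coth θ) (Set.Ioi 0) := by
  have heq : (fun θ : ℝ => θ * coth θ) = fun θ : ℝ => θ * Real.cosh θ / Real.sinh θ := by
    funext θ; rw [coth, mul_div_assoc]
  rw [heq]
  apply strictMonoOn_of_deriv_pos (convex_Ioi 0)
  · exact ((continuous_id.mul Real.continuous_cosh).continuousOn).div
      Real.continuous_sinh.continuousOn
      (fun x hx => (Real.sinh_pos_iff.2 hx).ne')
  · intro θ hθ
    rw [interior_Ioi] at hθ
    have hθ0 : 0 < θ := hθ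
    have hs : 0 < Real.sinh θ := Real.sinh_pos_iff.2 hθ0
    have hd : HasDerivAt (fun θ : ℝ => θ * Real.cosh θ / Real.sinh θ)
        (((1 * Real.cosh θ + θ * Real.sinh θ) * Real.sinh θ -
          θ * Real.cosh θ * Real.cosh θ) / (Real.sinh θ)^2) θ := by
      exact ((hasDerivAt_id θ).mul (Real.hasDerivAt_cosh θ)).div
        (Real.hasDerivAt_sinh θ) hs.ne'
    rw [hd.deriv]
    apply div_pos _ (by positivity)
    have h1 : θ < Real.sinh θ := Real.self_lt_sinh_iff.2 hθ0
    have h2 : 1 ≤ Real.cosh θ := Real.one_le_cosh θ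
    have h3 : Real.cosh θ ^ 2 - Real.sinh θ ^ 2 = 1 := Real.cosh_sq_sub_sinh_sq θ
    nlinarith [sq_nonneg (Real.sinh θ), sq_nonneg (Real.cosh θ)]

/-- For fixed μ, β, h > 0, the generalized theoretical SUPG
stabilization parameter `τ̃(r) = (h/(2βr))·ξ(Pe/r)`, with `Pe = βh/(2μ)` and
`ξ(θ) = coth(θ) − 1/θ`, is strictly decreasing in the polynomial degree
`r ∈ (0, ∞)`. -/
theorem stmt_14 (μ β h : ℝ) (hμ : 0 < μ) (hβ : 0 < β) (hh : 0 < h) :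
    let Pe : ℝ := β * h / (2 * μ)
    StrictAntiOn
      (fun r : ℝ => h / (2 * β * r) * (coth (Pe / r) - 1 / (Pe / r)))
      (Set.Ioi 0) := by
  intro Pe
  have hPe : 0 < Pe := by
    show 0 < β * h / (2 * μ); positivity
  intro a ha b hb hab
  have ha0 : 0 < a := ha
  have hb0 : 0 < b := hb
  have hθa : 0 < Pe / a := div_pos hPe ha0
  have hθb : 0 < Pe / b := div_pos hPe hb0
  have hθ : Pe / b < Pe / a := div_lt_div_of_pos_left hPe ha0 hab
  have key := coth_mul_strictMono (Set.mem_Ioi.mpr hθb) (Set.mem_Ioi.mpr hθa) hθ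
  simp only at key
  have eq : ∀ r : ℝ, 0 < r →
      h / (2 * β * r) * (coth (Pe / r) - 1 / (Pe / r)) =
      h / (2 * β * Pe) * (Pe / r * coth (Pe / r)) - h / (2 * β * Pe) := by
    intro r hr
    field_simp
  simp only []
  rw [eq a ha0, eq b hb0]
  have hc : 0 < h / (2 * β * Pe) := div_pos hh (by positivity)
  have := mul_lt_mul_of_pos_left key hc
  linarith
end
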